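/- Let p be any polynomial with complex coefficients and n ∈ ℕ. Then for j ∈ {1, 2} and every 0 ≤ k ≤ n−1, I_0(x^k Q_n[p](x) e^{−x³}) + I_j(x^k Q_n[p](x) e^{−x³}) = 0. In other words, the polynomial Q_n[p] is orthogonal to x^k for k = 0, …, n−1 with respect to the weight e^{−x³} on either of the contours Γ_0 ∪ Γ_1 and Γ_0 ∪ Γ_2. -/

import Mathlib

/-- The primitive third root of unity `ω = exp(2πi/3)`. -/
noncomputable def ω : ℂ := Complex.exp (2 * Real.pi * Complex.I / 3)

/-- Integral over the ray `Γ₀ = [0,∞)`. -/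
noncomputable def I0 (f : ℂ → ℂ) : ℂ := ∫ t in Set.Ioi (0 : ℝ), f t

/-- Integral over the ray `Γ₁ = ω·[0,∞)`, oriented towards the origin. -/
noncomputable def I1 (f : ℂ → ℂ) : ℂ := -ω * ∫ t in Set.Ioi (0 : ℝ), f (ω * t)

/-- Integral over the ray `Γ₂ = ω²·[0,∞)`, oriented towards the origin. -/
noncomputable def I2 (f : ℂ → ℂ) : ℂ := -ω ^ 2 * ∫ t in Set.Ioi (0 : ℝ), f (ω ^ 2 * t)

/-- `Q n p x = (−1)ⁿ 3⁻ⁿ e^{x³} (d/dx)ⁿ (e^{−x³} p(x))`. -/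
noncomputable def Q (n : ℕ) (p : Polynomial ℂ) : ℂ → ℂ := fun x =>
  (-1) ^ n / 3 ^ n * Complex.exp (x ^ 3) *
    iteratedDeriv n (fun z => Complex.exp (-z ^ 3) * p.eval z) x

/-!
Conjugating `d/dx` by the weight gives `e^{x³} (d/dx) (e^{-x³} q) = q' - 3x² q =: D₃ q`, so
`Qₙ[p]` is the polynomial `(-1/3)ⁿ D₃ⁿ p`. Integrating by parts `n` times, `xᵏ D₃ⁿ p = D₃ w`
for a polynomial `w` as soon as `k < n`, hence `xᵏ Qₙ[p](x) e^{-x³}` is a multiple of the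
derivative of `e^{-x³} w(x)`. On each ray `a·[0,∞)` with `a³ = 1` this antiderivative decays
like `e^{-t³}`, so the integral from `0` to `a·∞` is `-(-1/3)ⁿ w(0)`, independently of `a`;
the contributions of the ray `Γ₀` and of the reversed ray `Γⱼ` therefore cancel.
-/

open Polynomial MeasureTheory Filter Set Topology Asymptotics

namespace Polynomial

variable {R : Type*} [CommRing R]

/-- `e^{P} (d/dx) e^{-P}` for `P' = r`. -/
noncomputable def twistedDerivative (r : R[X]) : R[X] →ₗ[R] R[X] :=
  derivative - LinearMap.mulLeft R r

theorem twistedDerivative_apply (r q : R[X]) :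
    twistedDerivative r q = derivative q - r * q := rfl

theorem twistedDerivative_mul (r q s : R[X]) :
    twistedDerivative r (q * s) = derivative q * s + q * twistedDerivative r s := by
  simp only [twistedDerivative_apply, derivative_mul]
  ring

theorem exists_twistedDerivative_eq_mul_iterate (r p : R[X]) {q : R[X]} {n : ℕ}
    (hq : derivative^[n] q = 0) :
    ∃ w, twistedDerivative r w = q * (twistedDerivative r)^[n] p := by
  induction n generalizing q with
  | zero => exact ⟨0, by simp_all⟩
  | succ n ih =>
    obtain ⟨v, hv⟩ := ih (q := derivative q) (by rwa [← Function.iterate_succ_apply])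
    refine ⟨q * (twistedDerivative r)^[n] p - v, ?_⟩
    rw [map_sub, twistedDerivative_mul, hv, Function.iterate_succ_apply']
    ring

end Polynomial

theorem hasDerivAt_cexp_neg_eval_mul_eval (P q : ℂ[X]) (z : ℂ) :
    HasDerivAt (fun w => Complex.exp (-P.eval w) * q.eval w)
      (Complex.exp (-P.eval z) * (twistedDerivative (derivative P) q).eval z) z := by
  refine (((P.hasDerivAt z).fun_neg.cexp).fun_mul (q.hasDerivAt z)).congr_deriv ?_
  simp only [twistedDerivative_apply, eval_sub, eval_mul]
  ring

theorem iteratedDeriv_cexp_neg_eval_mul_eval (P q : ℂ[X]) (m : ℕ) :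
    iteratedDeriv m (fun z => Complex.exp (-P.eval z) * q.eval z) =
      fun z => Complex.exp (-P.eval z) * ((twistedDerivative (derivative P))^[m] q).eval z := by
  induction m with
  | zero => rfl
  | succ m ih =>
    rw [iteratedDeriv_succ, ih, Function.iterate_succ_apply']
    exact funext fun z => (hasDerivAt_cexp_neg_eval_mul_eval P _ z).deriv

local notation "D₃" => twistedDerivative (derivative (X ^ 3 : ℂ[X]))

theorem Q_eq_eval_iterate_twistedDerivative (n : ℕ) (p : ℂ[X]) :
    Q n p = fun x => (-1) ^ n / 3 ^ n * (D₃^[n] p).eval x := by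
  have h := iteratedDeriv_cexp_neg_eval_mul_eval (X ^ 3) p n
  simp only [eval_pow, eval_X] at h
  funext x
  have hexp : Complex.exp (x ^ 3) * Complex.exp (-x ^ 3) = 1 := by
    rw [← Complex.exp_add, add_neg_cancel, Complex.exp_zero]
  rw [Q, h]
  linear_combination (-1) ^ n / 3 ^ n * (D₃^[n] p).eval x * hexp

theorem cexp_neg_mul_cube {a : ℂ} (ha : a ^ 3 = 1) (t : ℝ) :
    Complex.exp (-(a * t) ^ 3) = Real.exp (-t ^ 3) := by
  push_cast [mul_pow, ha, one_mul]
  rfl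

theorem tendsto_pow_mul_exp_sub_cube (i : ℕ) :
    Tendsto (fun t : ℝ => t ^ i * Real.exp (t - t ^ 3)) atTop (𝓝 0) := by
  refine squeeze_zero' ?_ ?_ (Real.tendsto_pow_mul_exp_neg_atTop_nhds_zero i)
  · filter_upwards [eventually_ge_atTop 0] with t ht
    positivity
  · filter_upwards [eventually_ge_atTop 2] with t ht
    gcongr
    nlinarith [mul_nonneg (by linarith : 0 ≤ t) (by nlinarith : 0 ≤ t ^ 2 - 2)]

theorem tendsto_exp_sub_cube_mul_eval (s : ℂ[X]) (a : ℂ) :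
    Tendsto (fun t : ℝ => (Real.exp (t - t ^ 3) : ℂ) * s.eval (a * t)) atTop (𝓝 0) := by
  induction s using Polynomial.induction_on' with
  | add u v hu hv => simpa [mul_add] using hu.add hv
  | monomial i c =>
    have h := ((Complex.continuous_ofReal.tendsto 0).comp
      (tendsto_pow_mul_exp_sub_cube i)).const_mul (c * a ^ i)
    rw [Complex.ofReal_zero, mul_zero] at h
    refine h.congr fun t => ?_
    simp only [Function.comp_apply, eval_monomial]
    push_cast
    ring

theorem isBigO_cexp_neg_cube_mul_eval (s : ℂ[X]) {a : ℂ} (ha : a ^ 3 = 1) :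
    (fun t : ℝ => Complex.exp (-(a * t) ^ 3) * s.eval (a * t)) =O[atTop]
      fun t => Real.exp (-t) := by
  have h := (Complex.isBigO_ofReal_left.mpr (isBigO_refl (fun t => Real.exp (-t)) atTop)).mul
    ((tendsto_exp_sub_cube_mul_eval s a).isBigO_one ℝ)
  simp only [mul_one] at h
  refine h.congr_left fun t => ?_
  rw [cexp_neg_mul_cube ha, ← mul_assoc, ← Complex.ofReal_mul, ← Real.exp_add]
  ring_nf

theorem integrableOn_cexp_neg_cube_mul_eval (s : ℂ[X]) {a : ℂ} (ha : a ^ 3 = 1) :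
    IntegrableOn (fun t : ℝ => Complex.exp (-(a * t) ^ 3) * s.eval (a * t)) (Ioi 0) := by
  have hcont : Continuous fun t : ℝ => Complex.exp (-(a * t) ^ 3) * s.eval (a * t) := by
    fun_prop
  refine IntegrableOn.mono_set ?_ Ioi_subset_Ici_self
  exact (hcont.continuousOn.locallyIntegrableOn measurableSet_Ici).integrableOn_of_isBigO_atTop
    (isBigO_cexp_neg_cube_mul_eval s ha)
    ⟨Ioi 0, Ioi_mem_atTop 0, by simpa using exp_neg_integrableOn_Ioi 0 one_pos⟩

theorem integral_Ioi_cexp_neg_cube_mul_eval_twistedDerivative (w : ℂ[X]) {a : ℂ}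
    (ha : a ^ 3 = 1) :
    a * ∫ t in Ioi (0 : ℝ), Complex.exp (-(a * t) ^ 3) * (D₃ w).eval (a * t) = -w.eval 0 := by
  have hderiv (t : ℝ) : HasDerivAt (fun t : ℝ => Complex.exp (-(a * t) ^ 3) * w.eval (a * t))
      (a * (Complex.exp (-(a * t) ^ 3) * (D₃ w).eval (a * t))) t := by
    have h := hasDerivAt_cexp_neg_eval_mul_eval (X ^ 3) w (a * t)
    simp only [eval_pow, eval_X] at h
    simpa [Function.comp_def, mul_comm a] using
      (h.comp (t : ℂ) ((hasDerivAt_id (t : ℂ)).const_mul a)).comp_ofReal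
  have hlim : Tendsto (fun t : ℝ => Complex.exp (-(a * t) ^ 3) * w.eval (a * t)) atTop (𝓝 0) :=
    (isBigO_cexp_neg_cube_mul_eval w ha).trans_tendsto Real.tendsto_exp_neg_atTop_nhds_zero
  rw [← integral_const_mul, integral_Ioi_of_hasDerivAt_of_tendsto' (fun t _ => hderiv t)
    ((integrableOn_cexp_neg_cube_mul_eval _ ha).const_mul a) hlim]
  simp

theorem ω_pow_three : ω ^ 3 = 1 := by
  have h := (Complex.isPrimitiveRoot_exp 3 three_ne_zero).pow_eq_one
  rwa [Nat.cast_ofNat] at h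

/-- For every polynomial `p`, `n ∈ ℕ`, `j ∈ {1,2}` and `0 ≤ k ≤ n−1`,
`I₀(xᵏ Qₙ[p](x) e^{−x³}) + I_j(xᵏ Qₙ[p](x) e^{−x³}) = 0`: the polynomial `Qₙ[p]` is
orthogonal to `xᵏ`, `k = 0,…,n−1`, with respect to `e^{−x³}` on both `Γ₀ ∪ Γ₁`
and `Γ₀ ∪ Γ₂`. -/
theorem stmt4 (p : Polynomial ℂ) (n k : ℕ) (hk : k < n) :
    I0 (fun x => x ^ k * Q n p x * Complex.exp (-x ^ 3)) +
      I1 (fun x => x ^ k * Q n p x * Complex.exp (-x ^ 3)) = 0 ∧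
    I0 (fun x => x ^ k * Q n p x * Complex.exp (-x ^ 3)) +
      I2 (fun x => x ^ k * Q n p x * Complex.exp (-x ^ 3)) = 0 := by
  obtain ⟨w, hw⟩ := exists_twistedDerivative_eq_mul_iterate (derivative (X ^ 3)) p
    (iterate_derivative_eq_zero (p := X ^ k) (by simpa using hk))
  set c : ℂ := (-1) ^ n / 3 ^ n
  set f := fun x : ℂ => x ^ k * Q n p x * Complex.exp (-x ^ 3)
  have hf : f = fun x => c * (Complex.exp (-x ^ 3) * (D₃ w).eval x) := by
    funext x
    simp only [f, hw, Q_eq_eval_iterate_twistedDerivative, eval_mul, eval_pow, eval_X]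
    ring
  have hray (a : ℂ) (ha : a ^ 3 = 1) : a * ∫ t in Ioi (0 : ℝ), f (a * t) = -(c * w.eval 0) := by
    simp only [hf]
    rw [integral_const_mul, mul_left_comm,
      integral_Ioi_cexp_neg_cube_mul_eval_twistedDerivative w ha, mul_neg]
  have h1 := hray 1 (one_pow 3)
  simp only [one_mul] at h1
  refine ⟨?_, ?_⟩
  · rw [I0, I1]
    linear_combination h1 - hray ω ω_pow_three
  · rw [I0, I2]
    linear_combination h1 - hray (ω ^ 2) (by rw [← pow_mul, pow_mul', ω_pow_three, one_pow])
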